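/- arXiv:2511.12595 — 3 statements merged into one kernel-verified Lean document; each statement's English description precedes it below -/
import Mathlib

section
/- Method of moments for joint Poisson limits (Theorem 2.4 of the paper, Bollobás Theorem 1.23): Let ((Ω_i, P_i))_{i∈ℕ} be a sequence of probability spaces, let m ≥ 1, and for each i ∈ ℕ let N_{1,i}, …, N_{m,i} : Ω_i → ℕ be measurable random variables. Suppose there exist λ_1, …, λ_m ∈ (0, ∞) such that for every choice of k_1, …, k_m ∈ ℕ the function ω ↦ ∏_{j=1}^m (N_{j,i}(ω))_{k_j} is integrable on (Ω_i, P_i) for every i, and lim_{i→∞} E_i[∏_{j=1}^m (N_{j,i})_{k_j}] = ∏_{j=1}^m λ_j^{k_j}. Then for all n_1, …, n_m ∈ ℕ, lim_{i→∞} P_i({ω ∈ Ω_i : N_{1,i}(ω) = n_1, …, N_{m,i}(ω) = n_m}) = ∏_{j=1}^m λ_j^{n_j} e^{−λ_j} / n_j!. -/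
/-!
On `ℕ`, `𝟙[x = n] = ∑ r, (-1) ^ r * C(x, n) * C(x - n, r)`, and cutting the sum after `r = T`
errs by at most `C(x, n) * C(x - n, T + 1)` (Bonferroni). Both the cut-off sum and the error
bound are linear combinations of falling factorials `(x)_k`, so the product over the coordinates
of the cut-off sums, and the product of `1 +` the error bounds, have expectations converging to
the same expressions with `(x)_k` replaced by `λ ^ k`. These are a Taylor polynomial of
`λ ^ n * exp (-λ) / n!` and a quantity that vanishes as `T → ∞`.
-/

open MeasureTheory Filter Polynomial Finset Topology
open scoped Nat

theorem tendsto_of_approx_of_dist_le {ι κ E : Type*} [PseudoMetricSpace E] {l : Filter ι}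
    {l' : Filter κ} [l'.NeBot] {f : ι → E} {G : κ → ι → E} {H : κ → ι → ℝ} {g : κ → E}
    {h : κ → ℝ} {L : E} (hG : ∀ T, Tendsto (G T) l (𝓝 (g T)))
    (hH : ∀ T, Tendsto (H T) l (𝓝 (h T))) (hfG : ∀ T i, dist (f i) (G T i) ≤ H T i)
    (hg : Tendsto g l' (𝓝 L)) (hh : Tendsto h l' (𝓝 0)) : Tendsto f l (𝓝 L) := by
  refine Metric.tendsto_nhds.2 fun ε hε => ?_
  obtain ⟨T, hgT, hhT⟩ := (Metric.tendsto_nhds.1 hg (ε / 3) (by positivity)).and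
    (hh.eventually (gt_mem_nhds (by positivity : (0 : ℝ) < ε / 3))) |>.exists
  filter_upwards [Metric.tendsto_nhds.1 (hG T) (ε / 3) (by positivity),
    (hH T).eventually (gt_mem_nhds hhT)] with i hGi hHi
  linarith [dist_triangle4 (f i) (G T i) (g T) L, hfG T i]

lemma abs_prod_sub_prod_le {ι : Type*} (s : Finset ι) {a b D : ι → ℝ}
    (ha : ∀ j ∈ s, |a j| ≤ 1) (hab : ∀ j ∈ s, |a j - b j| ≤ D j) :
    |∏ j ∈ s, a j - ∏ j ∈ s, b j| ≤ ∏ j ∈ s, (1 + D j) - 1 := by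
  classical
  induction s using Finset.induction_on with
  | empty => simp
  | insert x s hx ih =>
    simp only [mem_insert, forall_eq_or_imp] at ha hab
    have hA : |∏ j ∈ s, a j| ≤ 1 := by
      rw [abs_prod]; exact prod_le_one (fun _ _ => abs_nonneg _) ha.2
    have hB : |∏ j ∈ s, b j| ≤ ∏ j ∈ s, (1 + D j) := by
      have := abs_sub_abs_le_abs_sub (∏ j ∈ s, b j) (∏ j ∈ s, a j)
      rw [abs_sub_comm] at this
      linarith [ih ha.2 hab.2]
    rw [prod_insert hx, prod_insert hx, prod_insert hx]
    calc |a x * ∏ j ∈ s, a j - b x * ∏ j ∈ s, b j|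
        = |a x * (∏ j ∈ s, a j - ∏ j ∈ s, b j) + (a x - b x) * ∏ j ∈ s, b j| := by ring_nf
      _ ≤ |a x| * |∏ j ∈ s, a j - ∏ j ∈ s, b j| + |a x - b x| * |∏ j ∈ s, b j| := by
        rw [← abs_mul, ← abs_mul]; exact abs_add_le _ _
      _ ≤ 1 * (∏ j ∈ s, (1 + D j) - 1) + D x * ∏ j ∈ s, (1 + D j) := by
        gcongr
        · exact ha.1
        · exact ih ha.2 hab.2
        · exact (abs_nonneg _).trans hab.1
        · exact hab.1
      _ = (1 + D x) * ∏ j ∈ s, (1 + D j) - 1 := by ring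

/-- `p` evaluated at `x` with each `X ^ k` read as the falling factorial `(x)_k`. -/
noncomputable def descFactorialEval (x : ℕ) : ℝ[X] →ₗ[ℝ] ℝ :=
  Polynomial.lsum fun k => LinearMap.mulRight ℝ (x.descFactorial k : ℝ)

lemma descFactorialEval_apply (x : ℕ) (p : ℝ[X]) :
    descFactorialEval x p = p.sum fun k a => a * x.descFactorial k := rfl

@[simp]
lemma descFactorialEval_C_mul_X_pow (x k : ℕ) (a : ℝ) :
    descFactorialEval x (C a * X ^ k) = a * x.descFactorial k := by
  rw [descFactorialEval_apply, C_mul_X_pow_eq_monomial, sum_monomial_index a _ (zero_mul _)]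

@[simp]
lemma descFactorialEval_one (x : ℕ) : descFactorialEval x 1 = 1 := by
  simpa using descFactorialEval_C_mul_X_pow x 0 1

lemma prod_sum_mul_eq_sum_prod {ι R : Type*} [Fintype ι] [DecidableEq ι] [CommSemiring R]
    (p : ι → R[X]) (f : ι → ℕ → R) :
    ∏ j, (p j).sum (fun k a => a * f j k) =
      ∑ κ ∈ Fintype.piFinset fun j => (p j).support, (∏ j, (p j).coeff (κ j)) * ∏ j, f j (κ j) := by
  simp only [Polynomial.sum_def, prod_univ_sum, prod_mul_distrib]

/-- The Taylor polynomial of degree `n + T` of `t ↦ t ^ n * exp (-t) / n!`. -/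
noncomputable def poissonTaylor (n T : ℕ) : ℝ[X] :=
  ∑ r ∈ range (T + 1), C ((-1) ^ r / (n ! * r ! : ℝ)) * X ^ (n + r)

noncomputable def poissonTaylorRemainder (n T : ℕ) : ℝ[X] :=
  C ((n ! * (T + 1)! : ℝ)⁻¹) * X ^ (n + T + 1)

lemma descFactorial_add_div_factorial_mul_factorial (x n r : ℕ) :
    (x.descFactorial (n + r) : ℝ) / (n ! * r !) = x.choose n * (x - n).choose r := by
  rw [← Nat.descFactorial_mul_descFactorial (Nat.le_add_right n r), Nat.add_sub_cancel_left,
    Nat.descFactorial_eq_factorial_mul_choose, Nat.descFactorial_eq_factorial_mul_choose]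
  push_cast
  field_simp

lemma descFactorialEval_poissonTaylor (x n T : ℕ) :
    descFactorialEval x (poissonTaylor n T) =
      x.choose n * ∑ r ∈ range (T + 1), (-1) ^ r * ((x - n).choose r : ℝ) := by
  simp only [poissonTaylor, map_sum, descFactorialEval_C_mul_X_pow, mul_sum]
  refine sum_congr rfl fun r _ => ?_
  rw [mul_left_comm, ← descFactorial_add_div_factorial_mul_factorial]
  ring

lemma descFactorialEval_poissonTaylorRemainder (x n T : ℕ) :
    descFactorialEval x (poissonTaylorRemainder n T) = x.choose n * (x - n).choose (T + 1) := by
  rw [poissonTaylorRemainder, descFactorialEval_C_mul_X_pow, add_assoc,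
    ← descFactorial_add_div_factorial_mul_factorial, inv_mul_eq_div]

lemma abs_ite_sub_alternating_sum_choose_le (M T : ℕ) :
    |(if M = 0 then 1 else 0 : ℝ) - ∑ r ∈ range (T + 1), (-1) ^ r * (M.choose r : ℝ)| ≤
      M.choose (T + 1) := by
  rcases M with _ | M
  · simp [sum_range_succ']
  · have h := congrArg (Int.cast : ℤ → ℝ)
      (Int.alternating_sum_range_choose_eq_choose (n := M) (m := T))
    push_cast at h
    rw [h, if_neg M.succ_ne_zero, zero_sub, abs_neg, abs_mul, abs_pow, abs_neg, abs_one, one_pow,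
      one_mul, Nat.abs_cast, Nat.choose_succ_succ, Nat.cast_add]
    exact le_add_of_nonneg_right (Nat.cast_nonneg _)

lemma abs_ite_sub_descFactorialEval_poissonTaylor_le (x n T : ℕ) :
    |(if x = n then 1 else 0 : ℝ) - descFactorialEval x (poissonTaylor n T)| ≤
      descFactorialEval x (poissonTaylorRemainder n T) := by
  have hind : (if x = n then 1 else 0 : ℝ) = x.choose n * if x - n = 0 then 1 else 0 := by
    rcases lt_trichotomy x n with h | rfl | h
    · simp [Nat.choose_eq_zero_of_lt h, h.ne]
    · simp
    · simp [h.ne', Nat.sub_ne_zero_of_lt h]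
  rw [descFactorialEval_poissonTaylor, descFactorialEval_poissonTaylorRemainder, hind, ← mul_sub,
    abs_mul, Nat.abs_cast]
  exact mul_le_mul_of_nonneg_left (abs_ite_sub_alternating_sum_choose_le _ _) (Nat.cast_nonneg _)

lemma tendsto_eval_poissonTaylor (n : ℕ) (t : ℝ) :
    Tendsto (fun T => (poissonTaylor n T).eval t) atTop (𝓝 (t ^ n * Real.exp (-t) / n !)) := by
  have hexp : Tendsto (fun T => ∑ r ∈ range (T + 1), (-t) ^ r / r !) atTop (𝓝 (Real.exp (-t))) := by
    rw [Real.exp_eq_exp_ℝ]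
    exact (NormedSpace.expSeries_div_hasSum_exp (-t)).tendsto_sum_nat.comp (tendsto_add_atTop_nat 1)
  convert hexp.const_mul (t ^ n / n !) using 2
  · simp only [poissonTaylor, eval_finsetSum, eval_mul, eval_C, eval_pow, eval_X, mul_sum]
    refine sum_congr rfl fun r _ => ?_
    rw [neg_pow t, pow_add]
    ring
  · ring

lemma tendsto_eval_poissonTaylorRemainder (n : ℕ) (t : ℝ) :
    Tendsto (fun T => (poissonTaylorRemainder n T).eval t) atTop (𝓝 0) := by
  have h := ((FloorSemiring.tendsto_pow_div_factorial_atTop t).comp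
    (tendsto_add_atTop_nat 1)).const_mul (t ^ n / n !)
  rw [mul_zero] at h
  refine h.congr fun T => ?_
  simp only [poissonTaylorRemainder, Function.comp_apply, eval_mul, eval_C, eval_pow, eval_X,
    add_assoc, pow_add]
  field_simp

section FactorialMoments

variable {ι : Type*} [Fintype ι]

lemma integrable_prod_descFactorialEval {Ω : Type*} [MeasurableSpace Ω] {μ : Measure Ω}
    {N : ι → Ω → ℕ}
    (hint : ∀ k : ι → ℕ, Integrable (fun ω => ∏ j, ((N j ω).descFactorial (k j) : ℝ)) μ)
    (p : ι → ℝ[X]) :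
    Integrable (fun ω => ∏ j, descFactorialEval (N j ω) (p j)) μ := by
  classical
  simp only [descFactorialEval_apply, prod_sum_mul_eq_sum_prod]
  exact integrable_finsetSum _ fun κ _ => (hint κ).const_mul _

lemma integral_prod_descFactorialEval [DecidableEq ι] {Ω : Type*} [MeasurableSpace Ω]
    {μ : Measure Ω} {N : ι → Ω → ℕ}
    (hint : ∀ k : ι → ℕ, Integrable (fun ω => ∏ j, ((N j ω).descFactorial (k j) : ℝ)) μ)
    (p : ι → ℝ[X]) :
    ∫ ω, ∏ j, descFactorialEval (N j ω) (p j) ∂μ =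
      ∑ κ ∈ Fintype.piFinset fun j => (p j).support,
        (∏ j, (p j).coeff (κ j)) * ∫ ω, ∏ j, ((N j ω).descFactorial (κ j) : ℝ) ∂μ := by
  simp only [descFactorialEval_apply, prod_sum_mul_eq_sum_prod]
  rw [integral_finsetSum _ fun κ _ => (hint κ).const_mul _]
  exact sum_congr rfl fun κ _ => integral_const_mul _ _

lemma tendsto_integral_prod_descFactorialEval {α : Type*} {l : Filter α} {Ω : α → Type*}
    [∀ i, MeasurableSpace (Ω i)] {P : ∀ i, Measure (Ω i)} {N : ∀ i, ι → Ω i → ℕ} {lam : ι → ℝ}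
    (hint : ∀ (k : ι → ℕ) (i : α),
      Integrable (fun ω => ∏ j, ((N i j ω).descFactorial (k j) : ℝ)) (P i))
    (hmom : ∀ k : ι → ℕ,
      Tendsto (fun i => ∫ ω, ∏ j, ((N i j ω).descFactorial (k j) : ℝ) ∂(P i)) l
        (𝓝 (∏ j, lam j ^ k j)))
    (p : ι → ℝ[X]) :
    Tendsto (fun i => ∫ ω, ∏ j, descFactorialEval (N i j ω) (p j) ∂(P i)) l
      (𝓝 (∏ j, (p j).eval (lam j))) := by
  classical
  simp only [fun i => integral_prod_descFactorialEval (hint · i) p, eval_eq_sum,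
    prod_sum_mul_eq_sum_prod]
  exact tendsto_finsetSum _ fun κ _ => (hmom κ).const_mul _

lemma abs_measureReal_sub_integral_prod_poissonTaylor_le {Ω : Type*} [MeasurableSpace Ω]
    {μ : Measure Ω} [IsProbabilityMeasure μ] {N : ι → Ω → ℕ} (hN : ∀ j, Measurable (N j))
    (hint : ∀ k : ι → ℕ, Integrable (fun ω => ∏ j, ((N j ω).descFactorial (k j) : ℝ)) μ)
    (n : ι → ℕ) (T : ℕ) :
    |μ.real {ω | ∀ j, N j ω = n j} -
        ∫ ω, ∏ j, descFactorialEval (N j ω) (poissonTaylor (n j) T) ∂μ| ≤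
      ∫ ω, ∏ j, descFactorialEval (N j ω) (1 + poissonTaylorRemainder (n j) T) ∂μ - 1 := by
  classical
  set S := {ω | ∀ j, N j ω = n j}
  have hS : MeasurableSet S := by
    simpa only [S, Set.ofPred_forall] using
      MeasurableSet.iInter fun j => measurableSet_eq_fun (hN j) (measurable_const (a := n j))
  have hindicator : S.indicator (1 : Ω → ℝ) = fun ω => ∏ j, (if N j ω = n j then 1 else 0 : ℝ) := by
    ext ω
    simp [S, Fintype.prod_boole, Set.indicator_apply]
  have hu : Integrable (S.indicator (1 : Ω → ℝ)) μ := (integrable_const 1).indicator hS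
  have hv := integrable_prod_descFactorialEval hint fun j => poissonTaylor (n j) T
  have hw := integrable_prod_descFactorialEval hint fun j => 1 + poissonTaylorRemainder (n j) T
  rw [← integral_indicator_one hS, ← integral_sub hu hv]
  calc _ ≤ ∫ ω, |S.indicator 1 ω - ∏ j, descFactorialEval (N j ω) (poissonTaylor (n j) T)| ∂μ :=
        abs_integral_le_integral_abs
    _ ≤ ∫ ω, (∏ j, descFactorialEval (N j ω) (1 + poissonTaylorRemainder (n j) T) - 1) ∂μ := by
        refine integral_mono (hu.sub hv).abs (hw.sub (integrable_const 1)) fun ω => ?_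
        simpa only [hindicator, map_add, descFactorialEval_one] using
          abs_prod_sub_prod_le univ (fun j _ => by split_ifs <;> simp)
            fun j _ => abs_ite_sub_descFactorialEval_poissonTaylor_le (N j ω) (n j) T
    _ = _ := by rw [integral_sub hw (integrable_const 1), integral_const, probReal_univ, one_smul]

end FactorialMoments

theorem method_of_moments_joint_poisson_general
    (Ω : ℕ → Type*) [∀ i, MeasurableSpace (Ω i)]
    (P : ∀ i, Measure (Ω i)) [∀ i, IsProbabilityMeasure (P i)]
    (m : ℕ)
    (N : ∀ i, Fin m → Ω i → ℕ) (hN : ∀ i j, Measurable (N i j))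
    (lam : Fin m → ℝ)
    (hint : ∀ (k : Fin m → ℕ) (i : ℕ),
      Integrable (fun ω => ∏ j, ((N i j ω).descFactorial (k j) : ℝ)) (P i))
    (hmom : ∀ k : Fin m → ℕ,
      Tendsto (fun i => ∫ ω, ∏ j, ((N i j ω).descFactorial (k j) : ℝ) ∂(P i))
        atTop (nhds (∏ j, lam j ^ k j))) :
    ∀ n : Fin m → ℕ,
      Tendsto (fun i => ((P i) {ω | ∀ j, N i j ω = n j}).toReal)
        atTop (nhds (∏ j, lam j ^ n j * Real.exp (-lam j) / (Nat.factorial (n j)))) := by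
  intro n
  have hremainder := (tendsto_finsetProd univ fun j _ =>
    ((tendsto_eval_poissonTaylorRemainder (n j) (lam j)).const_add 1)).sub_const 1
  simp only [add_zero, prod_const_one, sub_self] at hremainder
  refine tendsto_of_approx_of_dist_le (l' := atTop)
    (fun T => tendsto_integral_prod_descFactorialEval hint hmom fun j => poissonTaylor (n j) T)
    (fun T => (tendsto_integral_prod_descFactorialEval hint hmom
      fun j => 1 + poissonTaylorRemainder (n j) T).sub_const 1)
    (fun T i => abs_measureReal_sub_integral_prod_poissonTaylor_le (hN i) (hint · i) n T)
    (tendsto_finsetProd univ fun j _ => tendsto_eval_poissonTaylor (n j) (lam j)) ?_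
  simpa only [eval_add, eval_one] using hremainder

/-- Method of moments for joint Poisson limits (Bollobás, Theorem 1.23):
if the joint factorial moments of the vector `(N i 1, …, N i m)` converge to
`∏ j, λ j ^ k j` for every choice of `k`, then the joint probability mass
function converges to the product of Poisson mass functions. -/
theorem method_of_moments_joint_poisson
    (Ω : ℕ → Type*) [∀ i, MeasurableSpace (Ω i)]
    (P : ∀ i, Measure (Ω i)) [∀ i, IsProbabilityMeasure (P i)]
    (m : ℕ) (hm : 1 ≤ m)
    (N : ∀ i, Fin m → Ω i → ℕ) (hN : ∀ i j, Measurable (N i j))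
    (lam : Fin m → ℝ) (hlam : ∀ j, 0 < lam j)
    (hint : ∀ (k : Fin m → ℕ) (i : ℕ),
      Integrable (fun ω => ∏ j, ((N i j ω).descFactorial (k j) : ℝ)) (P i))
    (hmom : ∀ k : Fin m → ℕ,
      Tendsto (fun i => ∫ ω, ∏ j, ((N i j ω).descFactorial (k j) : ℝ) ∂(P i))
        atTop (nhds (∏ j, lam j ^ k j))) :
    ∀ n : Fin m → ℕ,
      Tendsto (fun i => ((P i) {ω | ∀ j, N i j ω = n j}).toReal)
        atTop (nhds (∏ j, lam j ^ n j * Real.exp (-lam j) / (Nat.factorial (n j)))) :=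
  method_of_moments_joint_poisson_general Ω P m N hN lam hint hmom
end

section
/- A distribution on ℕ is determined by Poisson factorial moments: let (Ω, P) be a probability space, λ > 0, and X : Ω → ℕ a measurable random variable such that for every k ∈ ℕ the factorial power (X)_k is integrable and E[(X)_k] = λ^k. Then X is Poisson distributed with mean λ, i.e. P(X = n) = λ^n e^{−λ} / n! for every n ∈ ℕ. -/
/-!
Factorial moments determine the point masses of an `ℕ`-valued variable by inclusion–exclusion:
`1{X = n} = ∑ₖ (-1)ᵏ (X)_{n+k} / (n! k!)` pointwise, since the right side equals
`C(X, n) ∑ₖ (-1)ᵏ C(X - n, k)`. When `∑ₖ E[(X)_{n+k}] / k!` converges the series may be integrated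
term by term, and for the moments `λ^{n+k}` it becomes the exponential series of `λⁿ e^{-λ} / n!`.
-/

open MeasureTheory Nat

theorem Nat.descFactorial_add (m n k : ℕ) :
    m.descFactorial (n + k) = n ! * m.choose n * (k ! * (m - n).choose k) := by
  rw [← Nat.descFactorial_eq_factorial_mul_choose, ← Nat.descFactorial_eq_factorial_mul_choose,
    ← Nat.descFactorial_mul_descFactorial (Nat.le_add_right n k), Nat.add_sub_cancel_left,
    mul_comm]

theorem hasSum_alternating_descFactorial (m n : ℕ) :
    HasSum (fun k : ℕ => (-1 : ℝ) ^ k / (n ! * k !) * m.descFactorial (n + k))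
      (if m = n then 1 else 0) := by
  have hterm : ∀ k : ℕ, (-1 : ℝ) ^ k / (n ! * k !) * m.descFactorial (n + k)
      = m.choose n * ((-1) ^ k * (m - n).choose k) := by
    intro k
    rw [Nat.descFactorial_add]
    push_cast
    field_simp
  have hvanish : ∀ k ∉ Finset.range (m - n + 1), (-1 : ℝ) ^ k * (m - n).choose k = 0 := by
    intro k hk
    rw [Nat.choose_eq_zero_of_lt (by simpa using hk), Nat.cast_zero, mul_zero]
  have hbinom := hasSum_sum_of_ne_finset_zero (L := .unconditional ℕ) hvanish
  rw [show ∑ k ∈ Finset.range (m - n + 1), (-1 : ℝ) ^ k * (m - n).choose k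
      = if m - n = 0 then 1 else 0 by exact_mod_cast Int.alternating_sum_range_choose] at hbinom
  have hvalue : (if m = n then 1 else 0 : ℝ) = m.choose n * if m - n = 0 then 1 else 0 := by
    rcases lt_trichotomy m n with h | rfl | h
    · simp [h.ne, Nat.choose_eq_zero_of_lt h]
    · simp
    · simp [h.ne', Nat.sub_eq_zero_iff_le.not.mpr h.not_ge]
  simpa only [hterm, hvalue] using hbinom.mul_left (m.choose n : ℝ)

theorem hasSum_alternating_integral_descFactorial {Ω : Type*} [MeasurableSpace Ω] (P : Measure Ω)
    (X : Ω → ℕ) (hX : Measurable X)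
    (hint : ∀ k : ℕ, Integrable (fun ω => ((X ω).descFactorial k : ℝ)) P) (n : ℕ)
    (hsum : Summable fun k : ℕ => (∫ ω, ((X ω).descFactorial (n + k) : ℝ) ∂P) / k !) :
    HasSum (fun k : ℕ => (-1 : ℝ) ^ k / (n ! * k !) * ∫ ω, ((X ω).descFactorial (n + k) : ℝ) ∂P)
      (P.real {ω | X ω = n}) := by
  set F : ℕ → Ω → ℝ := fun k ω => (-1 : ℝ) ^ k / (n ! * k !) * (X ω).descFactorial (n + k)
  have hF_int (k : ℕ) : Integrable (F k) P := (hint (n + k)).const_mul _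
  have hF_norm (k : ℕ) :
      ∫ ω, ‖F k ω‖ ∂P = (∫ ω, ((X ω).descFactorial (n + k) : ℝ) ∂P) / k ! / n ! := by
    simp only [F, norm_mul, norm_div, norm_pow, norm_neg, norm_one, one_pow, Real.norm_natCast]
    rw [integral_const_mul]
    ring
  have hF := hasSum_integral_of_summable_integral_norm hF_int
    (by simpa only [hF_norm] using hsum.div_const (n ! : ℝ))
  have hF_tsum : (fun ω => ∑' k, F k ω) = {ω | X ω = n}.indicator 1 := by
    ext ω
    rw [(hasSum_alternating_descFactorial (X ω) n).tsum_eq]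
    by_cases h : X ω = n <;> simp [h]
  rw [hF_tsum, integral_indicator_one (s := {ω | X ω = n}) (hX (measurableSet_singleton n))] at hF
  simpa only [F, integral_const_mul] using hF

theorem hasSum_alternating_pow_add (lam : ℝ) (n : ℕ) :
    HasSum (fun k : ℕ => (-1 : ℝ) ^ k / (n ! * k !) * lam ^ (n + k))
      (lam ^ n * Real.exp (-lam) / n !) := by
  have hexp : HasSum (fun k : ℕ => (-lam) ^ k / k !) (Real.exp (-lam)) := by
    simpa only [Real.exp_eq_exp_ℝ] using NormedSpace.expSeries_div_hasSum_exp (-lam)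
  have hterm : (fun k : ℕ => (-1 : ℝ) ^ k / (n ! * k !) * lam ^ (n + k))
      = fun k : ℕ => lam ^ n / n ! * ((-lam) ^ k / k !) := by
    ext k
    rw [neg_pow, pow_add]
    ring
  rw [hterm, mul_div_right_comm]
  exact hexp.mul_left _

theorem poisson_of_factorial_moments_general
    {Ω : Type*} [MeasurableSpace Ω] (P : Measure Ω)
    (X : Ω → ℕ) (hX : Measurable X) (lam : ℝ)
    (hint : ∀ k : ℕ, Integrable (fun ω => ((X ω).descFactorial k : ℝ)) P)
    (hmom : ∀ k : ℕ, ∫ ω, ((X ω).descFactorial k : ℝ) ∂P = lam ^ k) :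
    ∀ n : ℕ, (P {ω | X ω = n}).toReal = lam ^ n * Real.exp (-lam) / (Nat.factorial n : ℝ) := by
  intro n
  have hsum : Summable fun k : ℕ => (∫ ω, ((X ω).descFactorial (n + k) : ℝ) ∂P) / k ! := by
    simpa only [hmom, pow_add, mul_div_assoc]
      using (Real.summable_pow_div_factorial lam).mul_left (lam ^ n)
  rw [← measureReal_def]
  refine (hasSum_alternating_integral_descFactorial P X hX hint n hsum).unique ?_
  simpa only [hmom] using hasSum_alternating_pow_add lam n

/-- A distribution on `ℕ` is determined by Poisson factorial moments: if every
factorial power `(X)_k` is integrable with `E[(X)_k] = λ^k`, then `X` is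
Poisson distributed with mean `λ`. -/
theorem poisson_of_factorial_moments
    {Ω : Type*} [MeasurableSpace Ω] (P : Measure Ω) [IsProbabilityMeasure P]
    (X : Ω → ℕ) (hX : Measurable X) (lam : ℝ) (hlam : 0 < lam)
    (hint : ∀ k : ℕ, Integrable (fun ω => ((X ω).descFactorial k : ℝ)) P)
    (hmom : ∀ k : ℕ, ∫ ω, ((X ω).descFactorial k : ℝ) ∂P = lam ^ k) :
    ∀ n : ℕ, (P {ω | X ω = n}).toReal = lam ^ n * Real.exp (-lam) / (Nat.factorial n : ℝ) :=
  poisson_of_factorial_moments_general P X hX lam hint hmom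
end

section
/- Inclusion–exclusion formula for the point masses of an ℕ-valued random variable in terms of its factorial moments: let (Ω, P) be a probability space and X : Ω → ℕ measurable with E[3^X] < ∞. Then for every n ∈ ℕ: each factorial power (X)_{n+j} (j ∈ ℕ) is integrable, the series ∑_{j=0}^∞ E[(X)_{n+j}] / (n! · j!) converges, and P(X = n) = ∑_{j=0}^∞ (−1)^j · E[(X)_{n+j}] / (n! · j!). -/
/-!
Since `(x)_{n+j} = n! j! C(x,n) C(x-n,j)`, the binomial theorem gives, for every `x ∈ ℕ`,
`∑_j t^j (x)_{n+j} / (n! j!) = C(x,n) (1+t)^(x-n)`. At `t = -1` the right-hand side is the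
indicator of `x = n`; at `t = 1` it is `C(x,n) 2^(x-n) ≤ 3^x`, so `3^X` dominates the series of
absolute values and dominated convergence lets us integrate the alternating series term by term.
-/

open MeasureTheory Finset
open scoped Nat

theorem Nat.descFactorial_add_eq_factorial_mul_choose (x n j : ℕ) :
    x.descFactorial (n + j) = n ! * j ! * (x.choose n * (x - n).choose j) := by
  rw [← descFactorial_mul_descFactorial (Nat.le_add_right n j), Nat.add_sub_cancel_left,
    descFactorial_eq_factorial_mul_choose, descFactorial_eq_factorial_mul_choose]
  ring

theorem Nat.choose_mul_two_pow_le_three_pow (x n : ℕ) : x.choose n * 2 ^ (x - n) ≤ 3 ^ x := by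
  rcases le_or_gt n x with h | h
  · calc x.choose n * 2 ^ (x - n) = 1 ^ n * 2 ^ (x - n) * x.choose n := by ring
      _ ≤ ∑ m ∈ range (x + 1), 1 ^ m * 2 ^ (x - m) * x.choose m :=
        single_le_sum (f := fun m => 1 ^ m * 2 ^ (x - m) * x.choose m) (fun _ _ => zero_le _)
          (mem_range.2 (Nat.lt_succ_of_le h))
      _ = 3 ^ x := (add_pow 1 2 x).symm
  · simp [Nat.choose_eq_zero_of_lt h]

theorem hasSum_choose_mul_pow {R : Type*} [CommSemiring R] [TopologicalSpace R] (m : ℕ) (t : R) :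
    HasSum (fun j => m.choose j * t ^ j) ((1 + t) ^ m) := by
  have h : (1 + t) ^ m = ∑ j ∈ range (m + 1), m.choose j * t ^ j := by
    rw [add_comm, add_pow]
    exact sum_congr rfl fun j _ => by ring
  rw [h]
  exact hasSum_sum_of_ne_finset_zero fun j hj => by
    simp [Nat.choose_eq_zero_of_lt (by simpa using hj : m < j)]

theorem hasSum_pow_mul_descFactorial_add_div {K : Type*} [Field K] [CharZero K]
    [TopologicalSpace K] [IsTopologicalRing K] (x n : ℕ) (t : K) :
    HasSum (fun j => t ^ j * x.descFactorial (n + j) / (n ! * j !))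
      (x.choose n * (1 + t) ^ (x - n)) := by
  have h (j : ℕ) : t ^ j * x.descFactorial (n + j) / (n ! * j !)
      = x.choose n * ((x - n).choose j * t ^ j) := by
    have hfac : (n ! * j ! : K) ≠ 0 := by
      exact_mod_cast (Nat.mul_pos n.factorial_pos j.factorial_pos).ne'
    rw [Nat.descFactorial_add_eq_factorial_mul_choose, Nat.cast_mul, Nat.cast_mul (n !),
      mul_div_assoc, mul_div_cancel_left₀ _ hfac]
    push_cast
    ring
  simpa only [h] using (hasSum_choose_mul_pow (x - n) t).mul_left (x.choose n : K)

theorem hasSum_descFactorial_add_div (x n : ℕ) :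
    HasSum (fun j => (x.descFactorial (n + j) : ℝ) / (n ! * j !)) (x.choose n * 2 ^ (x - n)) := by
  simpa [one_add_one_eq_two] using hasSum_pow_mul_descFactorial_add_div x n (1 : ℝ)

theorem hasSum_neg_one_pow_mul_descFactorial_add_div (x n : ℕ) :
    HasSum (fun j => (-1 : ℝ) ^ j * x.descFactorial (n + j) / (n ! * j !))
      (if x = n then 1 else 0) := by
  have hval : (x.choose n : ℝ) * 0 ^ (x - n) = if x = n then 1 else 0 := by
    rcases lt_trichotomy x n with hlt | rfl | hgt
    · simp [hlt.ne, Nat.choose_eq_zero_of_lt hlt]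
    · simp
    · simp [hgt.ne', Nat.sub_ne_zero_of_lt hgt]
  simpa only [add_neg_cancel, hval] using hasSum_pow_mul_descFactorial_add_div x n (-1 : ℝ)

section DiscreteRandomVariable

variable {Ω α E : Type*} [MeasurableSpace Ω] [MeasurableSpace α] [DiscreteMeasurableSpace α]
  [Countable α] [NormedAddCommGroup E] {P : Measure Ω} {X : Ω → α}

theorem integrable_comp_of_norm_le (hX : Measurable X) {g : α → E} {h : α → ℝ}
    (hgh : ∀ x, ‖g x‖ ≤ h x) (hh : Integrable (fun ω => h (X ω)) P) :
    Integrable (fun ω => g (X ω)) P :=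
  hh.mono (StronglyMeasurable.of_discrete.comp_measurable hX).aestronglyMeasurable
    (ae_of_all _ fun ω => (hgh (X ω)).trans (Real.le_norm_self _))

theorem hasSum_integral_comp_of_norm_le [NormedSpace ℝ E] {ι : Type*} [Countable ι]
    (hX : Measurable X) {F : ι → α → E} {f : α → E} {b : ι → α → ℝ} {B : α → ℝ}
    (hFb : ∀ j x, ‖F j x‖ ≤ b j x) (hF : ∀ x, HasSum (F · x) (f x))
    (hb : ∀ x, HasSum (b · x) (B x)) (hB : Integrable (fun ω => B (X ω)) P) :
    HasSum (fun j => ∫ ω, F j (X ω) ∂P) (∫ ω, f (X ω) ∂P) :=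
  hasSum_integral_of_dominated_convergence (fun j ω => b j (X ω))
    (fun _ => (StronglyMeasurable.of_discrete.comp_measurable hX).aestronglyMeasurable)
    (fun j => ae_of_all _ fun ω => hFb j (X ω)) (ae_of_all _ fun ω => (hb (X ω)).summable)
    (hB.congr (ae_of_all _ fun ω => (hb (X ω)).tsum_eq.symm)) (ae_of_all _ fun ω => hF (X ω))

end DiscreteRandomVariable

theorem prob_eq_alternating_sum_factorial_moments_general
    {Ω : Type*} [MeasurableSpace Ω] (P : Measure Ω)
    (X : Ω → ℕ) (hX : Measurable X)
    (hint : Integrable (fun ω => (3 : ℝ) ^ X ω) P) (n : ℕ) :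
    (∀ j : ℕ, Integrable (fun ω => ((X ω).descFactorial (n + j) : ℝ)) P) ∧
    Summable (fun j : ℕ =>
      (∫ ω, ((X ω).descFactorial (n + j) : ℝ) ∂P) / ((Nat.factorial n : ℝ) * (Nat.factorial j : ℝ))) ∧
    (P {ω | X ω = n}).toReal
      = ∑' j : ℕ, (-1 : ℝ) ^ j
          * (∫ ω, ((X ω).descFactorial (n + j) : ℝ) ∂P) / ((Nat.factorial n : ℝ) * (Nat.factorial j : ℝ)) := by
  have hterm_nonneg (j x : ℕ) : 0 ≤ (x.descFactorial (n + j) : ℝ) / (n ! * j !) := by positivity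
  have hterm_norm (j x : ℕ) : ‖(x.descFactorial (n + j) : ℝ) / (n ! * j !)‖
      = (x.descFactorial (n + j) : ℝ) / (n ! * j !) := Real.norm_of_nonneg (hterm_nonneg j x)
  have hB : Integrable (fun ω => ((X ω).choose n * 2 ^ (X ω - n) : ℝ)) P :=
    integrable_comp_of_norm_le hX (g := fun x => (x.choose n * 2 ^ (x - n) : ℝ)) (fun x => by
      rw [Real.norm_of_nonneg (by positivity)]
      exact_mod_cast Nat.choose_mul_two_pow_le_three_pow x n) hint
  refine ⟨fun j => ?_, ?_, ?_⟩
  · have hc := integrable_comp_of_norm_le hX (fun x => (hterm_norm j x).trans_le <|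
      le_hasSum (hasSum_descFactorial_add_div x n) j fun i _ => hterm_nonneg i x) hB
    simpa [div_mul_cancel₀, Nat.factorial_ne_zero] using hc.mul_const ((n ! * j ! : ℝ))
  · have := hasSum_integral_comp_of_norm_le hX (fun j x => (hterm_norm j x).le)
      (fun x => hasSum_descFactorial_add_div x n) (fun x => hasSum_descFactorial_add_div x n) hB
    simpa only [integral_div] using this.summable
  · have := hasSum_integral_comp_of_norm_le hX
      (fun j x => by rw [mul_div_assoc, norm_mul, norm_pow, norm_neg, norm_one, one_pow, one_mul,
        hterm_norm])
      (fun x => hasSum_neg_one_pow_mul_descFactorial_add_div x n)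
      (fun x => hasSum_descFactorial_add_div x n) hB
    simp only [integral_div, integral_const_mul] at this
    have hind : (fun ω => if X ω = n then (1 : ℝ) else 0) = {ω | X ω = n}.indicator 1 := by
      ext ω; simp [Set.indicator_apply]
    rw [this.tsum_eq, hind]
    exact (integral_indicator_one (hX (measurableSet_singleton n))).symm

/-- Inclusion–exclusion for the point masses of an `ℕ`-valued random variable
in terms of its factorial moments: if `E[3^X] < ∞` then
`P(X = n) = ∑_{j} (−1)^j E[(X)_{n+j}] / (n! j!)`. -/
theorem prob_eq_alternating_sum_factorial_moments
    {Ω : Type*} [MeasurableSpace Ω] (P : Measure Ω) [IsProbabilityMeasure P]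
    (X : Ω → ℕ) (hX : Measurable X)
    (hint : Integrable (fun ω => (3 : ℝ) ^ X ω) P) (n : ℕ) :
    (∀ j : ℕ, Integrable (fun ω => ((X ω).descFactorial (n + j) : ℝ)) P) ∧
    Summable (fun j : ℕ =>
      (∫ ω, ((X ω).descFactorial (n + j) : ℝ) ∂P) / ((Nat.factorial n : ℝ) * (Nat.factorial j : ℝ))) ∧
    (P {ω | X ω = n}).toReal
      = ∑' j : ℕ, (-1 : ℝ) ^ j
          * (∫ ω, ((X ω).descFactorial (n + j) : ℝ) ∂P) / ((Nat.factorial n : ℝ) * (Nat.factorial j : ℝ)) :=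
  prob_eq_alternating_sum_factorial_moments_general P X hX hint n
end
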